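/- For any natural numbers r, s and any integer l, the comultiplication of the Radford algebra satisfies Δ(y^r x^s g^l) = Σ_{i=0}^{r} Σ_{j=0}^{s} ω^{-(r-i)j} · C(r,i)_ω · C(s,j)_{ω^{-1}} · y^{r-i} x^{s-j} g^l ⊗ y^i x^j g^{l+s-j+r-i}, where C(m,k)_q denotes the Gaussian (q-)binomial coefficient. -/

import Mathlib

open TensorProduct

noncomputable section

/-- The Gaussian (`q`-)binomial coefficient `C(m, k)_q`, defined by the `q`-Pascal
recurrence `C(m+1, k+1)_q = C(m, k)_q + q^(k+1) * C(m, k+1)_q`. -/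
def qBinom (q : ℂ) : ℕ → ℕ → ℂ
  | _, 0 => 1
  | 0, _ + 1 => 0
  | m + 1, k + 1 => qBinom q m k + q ^ (k + 1) * qBinom q m (k + 1)

/-- The Radford algebra: a Hopf algebra `H` over `ℂ` generated by elements
`g, x, y` subject to the relations `g^n = 1`, `x^n = y^n = 0`, `xg = ω g x`,
`g y = ω y g`, `x y = ω y x`, where `ω` is a root of unity of order `n > 1`,
with the comultiplication, counit and antipode determined by
`Δ(g) = g ⊗ g`, `ε(g) = 1`, `S(g) = g^(n-1)`,
`Δ(x) = x ⊗ g + 1 ⊗ x`, `ε(x) = 0`, `S(x) = -x g^(n-1)`,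
`Δ(y) = y ⊗ g + 1 ⊗ y`, `ε(y) = 0`, `S(y) = -y g^(n-1)`,
and with canonical `ℂ`-basis `{y^r x^s g^l | 0 ≤ r, s, l < n}`. -/
structure RadfordAlgebra (n : ℕ) (ω : ℂ) (H : Type*) [Ring H] [HopfAlgebra ℂ H] where
  g : H
  x : H
  y : H
  hn : 1 < n
  hω : IsPrimitiveRoot ω n
  g_pow : g ^ n = 1
  x_pow : x ^ n = 0
  y_pow : y ^ n = 0
  rel_xg : x * g = ω • (g * x)
  rel_gy : g * y = ω • (y * g)
  rel_xy : x * y = ω • (y * x)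
  comul_g : Coalgebra.comul (R := ℂ) g = g ⊗ₜ[ℂ] g
  counit_g : Coalgebra.counit (R := ℂ) g = 1
  antipode_g : HopfAlgebra.antipode (R := ℂ) g = g ^ (n - 1)
  comul_x : Coalgebra.comul (R := ℂ) x = x ⊗ₜ[ℂ] g + 1 ⊗ₜ[ℂ] x
  counit_x : Coalgebra.counit (R := ℂ) x = 0
  antipode_x : HopfAlgebra.antipode (R := ℂ) x = -(x * g ^ (n - 1))
  comul_y : Coalgebra.comul (R := ℂ) y = y ⊗ₜ[ℂ] g + 1 ⊗ₜ[ℂ] y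
  counit_y : Coalgebra.counit (R := ℂ) y = 0
  antipode_y : HopfAlgebra.antipode (R := ℂ) y = -(y * g ^ (n - 1))
  gen : Algebra.adjoin ℂ ({g, x, y} : Set H) = ⊤
  basis : Module.Basis (Fin n × Fin n × Fin n) ℂ H
  basis_eq : ∀ r s l : Fin n, basis (r, s, l) = y ^ (r : ℕ) * x ^ (s : ℕ) * g ^ (l : ℕ)

/-- A `*`-structure on a Hopf algebra `H` over `ℂ`: a conjugate-linear map
`* : H → H` such that `(h*)* = h`, `(hl)* = l* h*`,
`Δ(h*) = Σ (h₁)* ⊗ (h₂)*` and `S(S(h*)*) = h` for all `h, l ∈ H`.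
(The condition on `Δ` is expressed via the auxiliary additive map `starTensor`
on `H ⊗[ℂ] H` sending `a ⊗ b` to `a* ⊗ b*`, which is uniquely determined by
its two defining properties.) -/
structure HopfStarStructure (H : Type*) [Ring H] [HopfAlgebra ℂ H] where
  star : H → H
  star_add : ∀ a b : H, star (a + b) = star a + star b
  star_smul : ∀ (c : ℂ) (a : H), star (c • a) = (starRingEnd ℂ c) • star a
  star_star : ∀ a : H, star (star a) = a
  star_mul : ∀ a b : H, star (a * b) = star b * star a
  starTensor : H ⊗[ℂ] H → H ⊗[ℂ] H
  starTensor_add : ∀ u v : H ⊗[ℂ] H, starTensor (u + v) = starTensor u + starTensor v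
  starTensor_tmul : ∀ a b : H, starTensor (a ⊗ₜ[ℂ] b) = star a ⊗ₜ[ℂ] star b
  comul_star : ∀ a : H,
    Coalgebra.comul (R := ℂ) (star a) = starTensor (Coalgebra.comul (R := ℂ) a)
  antipode_star : ∀ a : H,
    HopfAlgebra.antipode (R := ℂ) (star (HopfAlgebra.antipode (R := ℂ) (star a))) = a

/-- Two `*`-structures `*'` and `*''` on a Hopf algebra `H` over `ℂ` are
equivalent if there is a Hopf algebra automorphism `ψ` of `H` such that
`ψ(h^{*'}) = ψ(h)^{*''}` for all `h ∈ H`. -/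
def HopfStarStructure.Equivalent {H : Type*} [Ring H] [HopfAlgebra ℂ H]
    (s₁ s₂ : HopfStarStructure H) : Prop :=
  ∃ ψ : H ≃ₐc[ℂ] H, ∀ h : H, ψ (s₁.star h) = s₂.star (ψ h)

/-!
Since `Δ` is an algebra map, `Δ(y^r x^s g^l) = Δ(y)^r Δ(x)^s Δ(g^l)`. Both `Δ(y) = 1 ⊗ y + y ⊗ g`
and `Δ(x) = 1 ⊗ x + x ⊗ g` are sums of two `q`-commuting terms (`q = ω` resp. `q = ω⁻¹`, as
`g y = ω y g` and `g x = ω⁻¹ x g`), so the Gaussian binomial theorem expands their powers, and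
`g^l` is group-like. Multiplying out, the factor `ω^{-(r-i)j}` comes from moving `g^{r-i}` past
`x^j` in the right tensor factor.
-/

open Finset Coalgebra

section QCommuting

variable {K A : Type*} [CommSemiring K] [Semiring A] [Algebra K A] {q : K} {a b : A}

theorem mul_pow_of_mul_eq_smul (h : b * a = q • (a * b)) (k : ℕ) :
    b * a ^ k = q ^ k • (a ^ k * b) := by
  induction k with
  | zero => simp
  | succ k ih =>
    rw [pow_succ, ← mul_assoc, ih, smul_mul_assoc, mul_assoc, h, mul_smul_comm, smul_smul,
      ← pow_succ, mul_assoc]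

theorem pow_mul_pow_of_mul_eq_smul (h : b * a = q • (a * b)) (m k : ℕ) :
    b ^ m * a ^ k = q ^ (m * k) • (a ^ k * b ^ m) := by
  induction m with
  | zero => simp
  | succ m ih =>
    rw [pow_succ, mul_assoc, mul_pow_of_mul_eq_smul h, mul_smul_comm, ← mul_assoc, ih,
      smul_mul_assoc, smul_smul, ← pow_add, mul_assoc, ← pow_succ, Nat.succ_mul, add_comm k]

end QCommuting

lemma qBinom_zero_right (q : ℂ) (m : ℕ) : qBinom q m 0 = 1 := by
  cases m <;> rfl

lemma qBinom_succ_succ (q : ℂ) (m k : ℕ) :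
    qBinom q (m + 1) (k + 1) = qBinom q m k + q ^ (k + 1) * qBinom q m (k + 1) := rfl

lemma qBinom_eq_zero_of_lt (q : ℂ) {m k : ℕ} (h : m < k) : qBinom q m k = 0 := by
  induction m generalizing k with
  | zero => obtain ⟨k, rfl⟩ := Nat.exists_eq_succ_of_ne_zero (by omega : k ≠ 0); rfl
  | succ m ih =>
    obtain ⟨k, rfl⟩ := Nat.exists_eq_succ_of_ne_zero (by omega : k ≠ 0)
    rw [qBinom_succ_succ, ih (by omega), ih (by omega), mul_zero, add_zero]

theorem add_pow_of_mul_eq_smul {A : Type*} [Semiring A] [Algebra ℂ A] {q : ℂ} {a b : A}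
    (h : b * a = q • (a * b)) (m : ℕ) :
    (a + b) ^ m = ∑ k ∈ range (m + 1), qBinom q m k • (a ^ k * b ^ (m - k)) := by
  induction m with
  | zero => simp [qBinom_zero_right]
  | succ m ih =>
    have expand : ∀ k ∈ range (m + 1),
        (a + b) * (qBinom q m k • (a ^ k * b ^ (m - k))) =
          qBinom q m k • (a ^ (k + 1) * b ^ (m - k)) +
            (q ^ k * qBinom q m k) • (a ^ k * b ^ (m + 1 - k)) := by
      intro k hk
      rw [show b ^ (m + 1 - k) = b * b ^ (m - k) by
          rw [← pow_succ', Nat.sub_add_comm (by grind)], add_mul,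
        mul_smul_comm, mul_smul_comm, ← mul_assoc, ← pow_succ', ← mul_assoc,
        mul_pow_of_mul_eq_smul h, smul_mul_assoc, smul_smul, mul_comm (qBinom q m k), mul_assoc]
    have pascal : ∀ k ∈ range (m + 1),
        qBinom q (m + 1) (k + 1) • (a ^ (k + 1) * b ^ (m + 1 - (k + 1))) =
          qBinom q m k • (a ^ (k + 1) * b ^ (m - k)) +
            (q ^ (k + 1) * qBinom q m (k + 1)) • (a ^ (k + 1) * b ^ (m - k)) := by
      intro k _
      rw [Nat.add_sub_add_right, qBinom_succ_succ, add_smul]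
    -- the extra top term vanishes since `C(m, m + 1)_q = 0`
    have shift : ∑ k ∈ range (m + 1), (q ^ k * qBinom q m k) • (a ^ k * b ^ (m + 1 - k)) =
        ∑ k ∈ range (m + 1), (q ^ (k + 1) * qBinom q m (k + 1)) • (a ^ (k + 1) * b ^ (m - k))
          + b ^ (m + 1) := by
      rw [sum_range_succ', sum_range_succ (fun k => _ • (a ^ (k + 1) * b ^ (m - k))),
        qBinom_eq_zero_of_lt q (Nat.lt_succ_self m)]
      simp [qBinom_zero_right]
    rw [pow_succ', ih, mul_sum, sum_congr rfl expand, sum_add_distrib, shift,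
      sum_range_succ' (fun k => qBinom q (m + 1) k • (a ^ k * b ^ (m + 1 - k))),
      sum_congr rfl pascal, sum_add_distrib, qBinom_zero_right, one_smul, pow_zero, one_mul,
      Nat.sub_zero, add_assoc]

section Bialgebra

variable {A : Type*} [Semiring A] [Bialgebra ℂ A]

theorem comul_pow_of_comul_eq_tmul_add_tmul {q : ℂ} {a g : A}
    (hcomul : comul (R := ℂ) a = a ⊗ₜ[ℂ] g + 1 ⊗ₜ[ℂ] a) (hga : g * a = q • (a * g)) (m : ℕ) :
    comul (R := ℂ) (a ^ m) =
      ∑ k ∈ range (m + 1), qBinom q m k • ((a ^ (m - k)) ⊗ₜ[ℂ] (a ^ k * g ^ (m - k))) := by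
  have hq : (a ⊗ₜ[ℂ] g) * ((1 : A) ⊗ₜ[ℂ] a) = q • (((1 : A) ⊗ₜ[ℂ] a) * (a ⊗ₜ[ℂ] g)) := by
    simp only [Algebra.TensorProduct.tmul_mul_tmul, mul_one, one_mul, hga,
      TensorProduct.tmul_smul]
  rw [← Bialgebra.comulAlgHom_apply, map_pow, Bialgebra.comulAlgHom_apply, hcomul, add_comm,
    add_pow_of_mul_eq_smul hq]
  simp only [Algebra.TensorProduct.tmul_pow, Algebra.TensorProduct.tmul_mul_tmul, one_pow,
    one_mul]

theorem IsGroupLikeElem.unitsZPow {u : Aˣ} (hu : IsGroupLikeElem ℂ (u : A)) (l : ℤ) :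
    IsGroupLikeElem ℂ ((u ^ l : Aˣ) : A) := by
  cases l with
  | ofNat k =>
    simpa only [Int.ofNat_eq_natCast, zpow_natCast, Units.val_pow_eq_pow_val] using hu.pow
  | negSucc k =>
    rw [zpow_negSucc, isGroupLikeElem_unitsInv, Units.val_pow_eq_pow_val]
    exact hu.pow

end Bialgebra

namespace RadfordAlgebra

variable {n : ℕ} {ω : ℂ} {H : Type*} [Ring H] [HopfAlgebra ℂ H] (R : RadfordAlgebra n ω H)

lemma g_mul_x : R.g * R.x = ω⁻¹ • (R.x * R.g) := by
  rw [R.rel_xg, smul_smul, inv_mul_cancel₀ (R.hω.ne_zero (by have := R.hn; omega)), one_smul]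

lemma isGroupLikeElem_g : IsGroupLikeElem ℂ R.g :=
  ⟨R.counit_g, R.comul_g⟩

end RadfordAlgebra

/-- the comultiplication of the monomials `y^r x^s g^l` (with
`l ∈ ℤ`, integer powers of `g` being taken via the unit `u` of `H` with
`u = g`). -/
theorem radford_comul_monomial
    {n : ℕ} {ω : ℂ} {H : Type*} [Ring H] [HopfAlgebra ℂ H]
    (R : RadfordAlgebra n ω H) (u : Hˣ) (hu : (u : H) = R.g) (r s : ℕ) (l : ℤ) :
    Coalgebra.comul (R := ℂ) (R.y ^ r * R.x ^ s * ((u ^ l : Hˣ) : H)) =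
      ∑ i ∈ Finset.range (r + 1), ∑ j ∈ Finset.range (s + 1),
        (ω ^ (-(((r - i) * j : ℕ) : ℤ)) * qBinom ω r i * qBinom ω⁻¹ s j) •
          ((R.y ^ (r - i) * R.x ^ (s - j) * ((u ^ l : Hˣ) : H)) ⊗ₜ[ℂ]
            (R.y ^ i * R.x ^ j *
              ((u ^ (l + ((s - j : ℕ) : ℤ) + ((r - i : ℕ) : ℤ)) : Hˣ) : H))) := by
  have g_pow_eq (c : ℕ) : R.g ^ c = ((u ^ (c : ℤ) : Hˣ) : H) := by
    rw [zpow_natCast, Units.val_pow_eq_pow_val, hu]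
  have right_factor (a b c : ℕ) :
      R.y ^ a * R.g ^ b * (R.x ^ c * R.g ^ (s - c)) * ((u ^ l : Hˣ) : H) =
        (ω⁻¹) ^ (b * c) • (R.y ^ a * R.x ^ c * ((u ^ (l + ((s - c : ℕ) : ℤ) + b) : Hˣ) : H)) := by
    rw [add_comm _ (b : ℤ), add_comm l, ← add_assoc, zpow_add, zpow_add, Units.val_mul,
      Units.val_mul, ← g_pow_eq, ← g_pow_eq, mul_assoc (R.y ^ a), ← mul_assoc (R.g ^ b),
      pow_mul_pow_of_mul_eq_smul R.g_mul_x, smul_mul_assoc, mul_smul_comm, smul_mul_assoc]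
    simp only [mul_assoc]
  have u_zpow_groupLike : IsGroupLikeElem ℂ ((u ^ l : Hˣ) : H) :=
    IsGroupLikeElem.unitsZPow (hu ▸ R.isGroupLikeElem_g) l
  rw [Bialgebra.comul_mul, Bialgebra.comul_mul,
    comul_pow_of_comul_eq_tmul_add_tmul R.comul_y R.rel_gy,
    comul_pow_of_comul_eq_tmul_add_tmul R.comul_x R.g_mul_x,
    u_zpow_groupLike.comul_eq_tmul_self, sum_mul_sum, sum_mul]
  refine sum_congr rfl fun i _ => ?_
  rw [sum_mul]
  refine sum_congr rfl fun j _ => ?_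
  rw [smul_mul_smul_comm, smul_mul_assoc, Algebra.TensorProduct.tmul_mul_tmul,
    Algebra.TensorProduct.tmul_mul_tmul, right_factor, TensorProduct.tmul_smul, smul_smul,
    zpow_neg, zpow_natCast, inv_pow]
  congr 1
  ring
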